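/- arXiv:1006.4996 — 2 statements merged into one kernel-verified Lean document; each statement's English description precedes it below -/
import Mathlib

section
/- Let p ∈ [1,∞] and q ∈ [1,∞] with 1/p + 1/q = 1, and let g ∈ L^p(Ω,μ). Define G(x) ∈ ℝ^m by G(x)_i = g(x⁽ⁱ⁾). If K_q(Γ) < ∞, then E‖R(X)G(X)‖₂ ≤ √n · m · √(K_q(Γ)) · ‖g‖_{L^p(Ω)}. -/
open MeasureTheory ProbabilityTheory ENNReal Matrix Filter

noncomputable section

/-- The smallest eigenvalue `s₁(A)` of the symmetric positive semidefinite matrix `AᵀA`. -/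
def s1 {m n : ℕ} (A : Matrix (Fin m) (Fin n) ℝ) : ℝ :=
  ⨅ i, (show (Aᵀ * A).IsHermitian by
    simpa using Matrix.isHermitian_conjTranspose_mul_self A).eigenvalues i

/-- Euclidean norm on `ℝ^n`. -/
def enorm2 {n : ℕ} (v : Fin n → ℝ) : ℝ := Real.sqrt (∑ j, v j ^ 2)

/-- The matrix `Γ(x)` with entries `Γ(x)_{ij} = γ_j(x⁽ⁱ⁾)`. -/
def dmat {Ω : Type*} {n m : ℕ} (γ : Fin n → Ω → ℝ) (x : Fin m → Ω) :
    Matrix (Fin m) (Fin n) ℝ := Matrix.of fun i j => γ j (x i)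

/-- The matrix `R(x) = (Γ(x)ᵀΓ(x))⁻¹Γ(x)ᵀ`. -/
def Rmat {Ω : Type*} {n m : ℕ} (γ : Fin n → Ω → ℝ) (x : Fin m → Ω) :
    Matrix (Fin n) (Fin m) ℝ := ((dmat γ x)ᵀ * dmat γ x)⁻¹ * (dmat γ x)ᵀ

/-- `β(x) = R(x) F(x)` where `F(x)_i = f(x⁽ⁱ⁾)`. -/
def betaFn {Ω : Type*} {n m : ℕ} (γ : Fin n → Ω → ℝ) (f : Ω → ℝ) (x : Fin m → Ω) :
    Fin n → ℝ := Rmat γ x *ᵥ fun i => f (x i)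

/-- The residue `ρ(a)(ω) = f(ω) - ∑ j a_j γ_j(ω)`. -/
def resid {Ω : Type*} {n : ℕ} (γ : Fin n → Ω → ℝ) (f : Ω → ℝ) (a : Fin n → ℝ) : Ω → ℝ :=
  fun ω => f ω - ∑ j, a j * γ j ω

/-!
Fix `x` with `Γ(x)ᵀΓ(x)` invertible and write `A = Γ(x)`, `G = G(x)`, `v = R(x)G`. Then `Av` is
the orthogonal projection of `G` onto the range of `A`, so `‖Av‖₂ ≤ ‖G‖₂`, while
`s₁(A)‖v‖₂² ≤ ‖Av‖₂²` because `s₁(A)` is the smallest eigenvalue of `AᵀA`. Hence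
`‖R(x)G(x)‖₂ ≤ ∑ᵢ s₁(Γ(x))^{-1/2} |g(x⁽ⁱ⁾)|`, and each of the `m` summands is integrated with
Hölder's inequality for the exponents `(q, p)`: `X⁽ⁱ⁾` has law `μ`, and
`‖s₁^{-1/2}‖_{L^q} = K_q(Γ)^{1/2}`. This gives the bound even without the factor `√n ≥ 1`.
-/

namespace Matrix

theorem isHermitian_transpose_mul_self {ι κ : Type*} [Fintype κ] (A : Matrix κ ι ℝ) :
    (Aᵀ * A).IsHermitian := by
  simpa using isHermitian_conjTranspose_mul_self A

variable {ι κ : Type*} [Fintype ι] [Fintype κ]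

theorem IsHermitian.mul_dotProduct_self_le_dotProduct_mulVec [DecidableEq ι] {B : Matrix ι ι ℝ}
    (hB : B.IsHermitian) {c : ℝ} (hc : ∀ i, c ≤ hB.eigenvalues i) (v : ι → ℝ) :
    c * (v ⬝ᵥ v) ≤ v ⬝ᵥ (B *ᵥ v) := by
  set U : Matrix ι ι ℝ := (hB.eigenvectorUnitary : Matrix ι ι ℝ)
  have hdiag : (diagonal (fun i => hB.eigenvalues i - c)).PosSemidef :=
    posSemidef_diagonal_iff.mpr fun i => sub_nonneg.mpr (hc i)
  have hshift : B - c • 1 = U * diagonal (fun i => hB.eigenvalues i - c) * Uᴴ := by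
    have hUU : U * Uᴴ = 1 := Unitary.mul_star_self_of_mem hB.eigenvectorUnitary.2
    conv_lhs => rw [hB.spectral_theorem]
    rw [Unitary.conjStarAlgAut_apply, ← diagonal_sub, mul_sub, sub_mul, ← hUU]
    simp [U, ← smul_one_eq_diagonal, star_eq_conjTranspose]
  have hpsd : (B - c • 1).PosSemidef := hshift ▸ hdiag.mul_mul_conjTranspose_same U
  simpa only [star_trivial, sub_mulVec, smul_mulVec, one_mulVec, dotProduct_sub, dotProduct_smul,
    smul_eq_mul, sub_nonneg] using hpsd.dotProduct_mulVec_nonneg v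

theorem dotProduct_mulVec_transpose_mul_self (A : Matrix κ ι ℝ) (v : ι → ℝ) :
    v ⬝ᵥ ((Aᵀ * A) *ᵥ v) = (A *ᵥ v) ⬝ᵥ (A *ᵥ v) := by
  rw [← mulVec_mulVec, dotProduct_mulVec, vecMul_transpose]

theorem dotProduct_self_mulVec_leastSquares_le [DecidableEq ι] {A : Matrix κ ι ℝ}
    (hA : IsUnit (Aᵀ * A).det) (G : κ → ℝ) :
    (A *ᵥ (((Aᵀ * A)⁻¹ * Aᵀ) *ᵥ G)) ⬝ᵥ (A *ᵥ (((Aᵀ * A)⁻¹ * Aᵀ) *ᵥ G)) ≤ G ⬝ᵥ G := by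
  set v := ((Aᵀ * A)⁻¹ * Aᵀ) *ᵥ G
  have hnormal : Aᵀ *ᵥ (A *ᵥ v) = Aᵀ *ᵥ G := by
    rw [mulVec_mulVec, mulVec_mulVec, ← Matrix.mul_assoc, mul_nonsing_inv _ hA, Matrix.one_mul]
  have hperp : (A *ᵥ v) ⬝ᵥ (G - A *ᵥ v) = 0 := by
    rw [dotProduct_comm, dotProduct_mulVec, ← mulVec_transpose, mulVec_sub, hnormal, sub_self,
      zero_dotProduct]
  have hres : 0 ≤ (G - A *ᵥ v) ⬝ᵥ (G - A *ᵥ v) := dotProduct_star_self_nonneg _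
  simp only [dotProduct_sub, sub_dotProduct, dotProduct_comm G] at hperp hres
  linarith

end Matrix

section SmallestEigenvalue

variable {m n : ℕ}

theorem s1_le_eigenvalues (A : Matrix (Fin m) (Fin n) ℝ) (i : Fin n) :
    s1 A ≤ (isHermitian_transpose_mul_self A).eigenvalues i :=
  ciInf_le (Set.finite_range _).bddBelow i

theorem exists_eigenvalues_eq_s1 (hn : 0 < n) (A : Matrix (Fin m) (Fin n) ℝ) :
    ∃ i, (isHermitian_transpose_mul_self A).eigenvalues i = s1 A := by
  have : Nonempty (Fin n) := Fin.pos_iff_nonempty.mp hn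
  obtain ⟨i, hi⟩ := Finite.exists_min (isHermitian_transpose_mul_self A).eigenvalues
  exact ⟨i, le_antisymm (le_ciInf hi) (s1_le_eigenvalues A i)⟩

theorem s1_nonneg (hn : 0 < n) (A : Matrix (Fin m) (Fin n) ℝ) : 0 ≤ s1 A := by
  obtain ⟨i, hi⟩ := exists_eigenvalues_eq_s1 hn A
  exact hi ▸ eigenvalues_conjTranspose_mul_self_nonneg A i

theorem s1_pos (hn : 0 < n) {A : Matrix (Fin m) (Fin n) ℝ} (hA : IsUnit (Aᵀ * A).det) :
    0 < s1 A := by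
  obtain ⟨i, hi⟩ := exists_eigenvalues_eq_s1 hn A
  have hpos : (Aᵀ * A).PosDef := by
    simpa using (posSemidef_conjTranspose_mul_self A).posDef_iff_isUnit.mpr
      ((isUnit_iff_isUnit_det _).mpr (by simpa using hA))
  exact hi ▸ hpos.eigenvalues_pos i

theorem s1_mul_dotProduct_self_le (A : Matrix (Fin m) (Fin n) ℝ) (v : Fin n → ℝ) :
    s1 A * (v ⬝ᵥ v) ≤ (A *ᵥ v) ⬝ᵥ (A *ᵥ v) :=
  dotProduct_mulVec_transpose_mul_self A v ▸
    (isHermitian_transpose_mul_self A).mul_dotProduct_self_le_dotProduct_mulVec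
      (s1_le_eigenvalues A) v

end SmallestEigenvalue

theorem enorm2_eq_sqrt_dotProduct {n : ℕ} (v : Fin n → ℝ) : enorm2 v = √(v ⬝ᵥ v) := by
  simp only [enorm2, dotProduct, sq]

theorem enorm2_le_sum_abs {n : ℕ} (v : Fin n → ℝ) : enorm2 v ≤ ∑ j, |v j| := by
  have hsum : 0 ≤ ∑ j, |v j| := Finset.sum_nonneg fun j _ => abs_nonneg (v j)
  refine Real.sqrt_le_iff.mpr ⟨hsum, ?_⟩
  simpa only [sq_abs] using
    Finset.sum_sq_le_sq_sum_of_nonneg (s := Finset.univ) fun j _ => abs_nonneg (v j)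

theorem enorm2_mulVec_leastSquares_le {m n : ℕ} (hn : 0 < n) {A : Matrix (Fin m) (Fin n) ℝ}
    (hA : IsUnit (Aᵀ * A).det) (G : Fin m → ℝ) :
    enorm2 (((Aᵀ * A)⁻¹ * Aᵀ) *ᵥ G) ≤ √(s1 A)⁻¹ * enorm2 G := by
  set v := ((Aᵀ * A)⁻¹ * Aᵀ) *ᵥ G
  have hs := s1_pos hn hA
  have hv : v ⬝ᵥ v ≤ (s1 A)⁻¹ * (G ⬝ᵥ G) :=
    (le_inv_mul_iff₀ hs).mpr <|
      (s1_mul_dotProduct_self_le A v).trans (dotProduct_self_mulVec_leastSquares_le hA G)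
  rw [enorm2_eq_sqrt_dotProduct, enorm2_eq_sqrt_dotProduct, ← Real.sqrt_mul (inv_pos.mpr hs).le]
  exact Real.sqrt_le_sqrt hv

theorem ofReal_enorm2_mulVec_leastSquares_le {m n : ℕ} (hn : 0 < n)
    {A : Matrix (Fin m) (Fin n) ℝ} (hA : IsUnit (Aᵀ * A).det) (G : Fin m → ℝ) :
    ENNReal.ofReal (enorm2 (((Aᵀ * A)⁻¹ * Aᵀ) *ᵥ G)) ≤ ∑ i, ‖√(s1 A)⁻¹ * G i‖ₑ := by
  calc ENNReal.ofReal (enorm2 (((Aᵀ * A)⁻¹ * Aᵀ) *ᵥ G))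
      ≤ ENNReal.ofReal (∑ i, |√(s1 A)⁻¹ * G i|) := by
        refine ENNReal.ofReal_le_ofReal ((enorm2_mulVec_leastSquares_le hn hA G).trans ?_)
        simp only [abs_mul, abs_of_nonneg (Real.sqrt_nonneg _), ← Finset.mul_sum]
        gcongr
        exact enorm2_le_sum_abs G
    _ = ∑ i, ‖√(s1 A)⁻¹ * G i‖ₑ := by
        simp only [ENNReal.ofReal_sum_of_nonneg fun i _ => abs_nonneg _, Real.enorm_eq_ofReal_abs]

section Measurability

variable {m n : ℕ}

theorem s1_le_rayleigh (A : Matrix (Fin m) (Fin n) ℝ) {v : Fin n → ℝ} (hv : v ≠ 0) :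
    s1 A ≤ (A *ᵥ v) ⬝ᵥ (A *ᵥ v) / (v ⬝ᵥ v) :=
  (le_div_iff₀ (by simpa using dotProduct_star_self_pos_iff.mpr hv)).mpr
    (s1_mul_dotProduct_self_le A v)

theorem s1_eq_iInf_rayleigh (hn : 0 < n) (A : Matrix (Fin m) (Fin n) ℝ) :
    s1 A = ⨅ v : {v : Fin n → ℝ // v ≠ 0}, (A *ᵥ v.1) ⬝ᵥ (A *ᵥ v.1) / (v.1 ⬝ᵥ v.1) := by
  have hH := isHermitian_transpose_mul_self A
  obtain ⟨i, hi⟩ := exists_eigenvalues_eq_s1 hn A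
  set u := ⇑(hH.eigenvectorBasis i)
  have hu : u ≠ 0 := fun h =>
    hH.eigenvectorBasis.orthonormal.ne_zero i (by ext j; simpa using congrFun h j)
  have : Nonempty {v : Fin n → ℝ // v ≠ 0} := ⟨⟨u, hu⟩⟩
  refine (IsGLB.ciInf_eq (IsLeast.isGLB ⟨⟨⟨u, hu⟩, ?_⟩, ?_⟩)).symm
  · have hu' : u ⬝ᵥ u ≠ 0 := by simpa using hu
    rw [← dotProduct_mulVec_transpose_mul_self, hH.mulVec_eigenvectorBasis, hi, dotProduct_smul,
      smul_eq_mul, mul_div_cancel_right₀ _ hu']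
  · rintro _ ⟨⟨v, hv⟩, rfl⟩
    exact s1_le_rayleigh A hv

theorem upperSemicontinuous_s1 (hn : 0 < n) :
    UpperSemicontinuous (s1 : Matrix (Fin m) (Fin n) ℝ → ℝ) := by
  simp_rw [funext (s1_eq_iInf_rayleigh hn)]
  refine upperSemicontinuous_ciInf (fun A => ⟨s1 A, ?_⟩) fun v => Continuous.upperSemicontinuous ?_
  · rintro _ ⟨v, rfl⟩
    exact s1_le_rayleigh A v.2
  · fun_prop

theorem measurable_s1_dmat {Ω : Type*} [MeasurableSpace Ω] (hn : 0 < n) {γ : Fin n → Ω → ℝ}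
    (hγ : ∀ j, Measurable (γ j)) : Measurable fun x : Fin m → Ω => s1 (dmat γ x) := by
  have hs1 : UpperSemicontinuous fun B : Fin m → Fin n → ℝ => s1 (Matrix.of B) :=
    upperSemicontinuous_s1 hn
  exact hs1.measurable.comp (measurable_pi_lambda _ fun i => measurable_pi_lambda _ fun j =>
    (hγ j).comp (measurable_pi_apply i))

end Measurability

section Integration

variable {α β : Type*} [MeasurableSpace α] [MeasurableSpace β]

theorem eLpNorm_sqrt {μ : Measure α} {f : α → ℝ} (hf : ∀ x, 0 ≤ f x) (q : ℝ≥0∞) :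
    eLpNorm (fun x => √(f x)) q μ = eLpNorm f (q / 2) μ ^ (1 / 2 : ℝ) := by
  have h := eLpNorm_norm_rpow (μ := μ) (p := q / 2) (fun x => √(f x)) two_pos
  have hsq : (fun x => ‖√(f x)‖ ^ (2 : ℝ)) = f := funext fun x => by
    rw [Real.norm_of_nonneg (Real.sqrt_nonneg _), Real.rpow_two, Real.sq_sqrt (hf x)]
  rw [hsq, ENNReal.ofReal_ofNat, ENNReal.div_mul_cancel two_ne_zero ENNReal.ofNat_ne_top] at h
  rw [h, ← ENNReal.rpow_mul]
  norm_num

theorem lintegral_enorm_mul_comp_le {μ : Measure α} {ν : Measure β} {φ : β → α}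
    (hφ : MeasurePreserving φ ν μ) {h : β → ℝ} (hh : AEStronglyMeasurable h ν) {g : α → ℝ}
    (hg : AEStronglyMeasurable g μ) (p q : ℝ≥0∞) [HolderConjugate q p] :
    ∫⁻ x, ‖h x * g (φ x)‖ₑ ∂ν ≤ eLpNorm h q ν * eLpNorm g p μ := by
  rw [← eLpNorm_one_eq_lintegral_enorm, ← eLpNorm_comp_measurePreserving hg hφ]
  simpa using eLpNorm_le_eLpNorm_mul_eLpNorm'_of_norm hh (hg.comp_measurePreserving hφ)
    (· * ·) 1 (Eventually.of_forall fun x => by simp [norm_mul])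

end Integration

theorem stmt0_general {Ω : Type*} [MeasurableSpace Ω] (μ : Measure Ω) [IsProbabilityMeasure μ]
    (n m : ℕ) (hn : 1 ≤ n)
    (γ : Fin n → Ω → ℝ) (hγ : ∀ j, Measurable (γ j))
    (hinv : ∀ᵐ x ∂(Measure.pi fun _ : Fin m => μ), IsUnit ((dmat γ x)ᵀ * dmat γ x).det)
    (p q : ℝ≥0∞) (hpq : 1 / p + 1 / q = 1)
    (g : Ω → ℝ) (hg : MemLp g p μ) :
    ∫⁻ x, ENNReal.ofReal (enorm2 (Rmat γ x *ᵥ fun i => g (x i)))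
        ∂(Measure.pi fun _ : Fin m => μ)
      ≤ ENNReal.ofReal (Real.sqrt n) * m *
        (eLpNorm (fun x : Fin m → Ω => (s1 (dmat γ x))⁻¹) (q / 2)
          (Measure.pi fun _ : Fin m => μ)) ^ (1 / 2 : ℝ) *
        eLpNorm g p μ := by
  set π := Measure.pi fun _ : Fin m => μ
  set K := eLpNorm (fun x : Fin m → Ω => (s1 (dmat γ x))⁻¹) (q / 2) π
  set h : (Fin m → Ω) → ℝ := fun x => √(s1 (dmat γ x))⁻¹
  have : HolderConjugate q p := holderConjugate_iff.mpr (by simpa [add_comm] using hpq)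
  have hh : AEStronglyMeasurable h π := (measurable_s1_dmat hn hγ).inv.sqrt.aestronglyMeasurable
  have heval (i : Fin m) := measurePreserving_eval (fun _ : Fin m => μ) i
  have hpointwise : ∀ᵐ x ∂π, ENNReal.ofReal (enorm2 (Rmat γ x *ᵥ fun i => g (x i))) ≤
      ∑ i, ‖h x * g (x i)‖ₑ := by
    filter_upwards [hinv] with x hx using ofReal_enorm2_mulVec_leastSquares_le hn hx _
  have hterm (i : Fin m) : ∫⁻ x, ‖h x * g (x i)‖ₑ ∂π ≤ K ^ (1 / 2 : ℝ) * eLpNorm g p μ := by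
    simpa only [h, eLpNorm_sqrt fun x => inv_nonneg.mpr (s1_nonneg hn _)] using
      lintegral_enorm_mul_comp_le (heval i) hh hg.1 p q
  have hsqrt : (1 : ℝ≥0∞) ≤ ENNReal.ofReal √n := by
    simpa using Real.one_le_sqrt.mpr (Nat.one_le_cast.mpr hn)
  calc ∫⁻ x, ENNReal.ofReal (enorm2 (Rmat γ x *ᵥ fun i => g (x i))) ∂π
      ≤ ∫⁻ x, ∑ i, ‖h x * g (x i)‖ₑ ∂π := lintegral_mono_ae hpointwise
    _ = ∑ i, ∫⁻ x, ‖h x * g (x i)‖ₑ ∂π :=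
        lintegral_finsetSum' _ fun i _ => (hh.mul (hg.1.comp_measurePreserving (heval i))).enorm
    _ ≤ ∑ _i : Fin m, K ^ (1 / 2 : ℝ) * eLpNorm g p μ := Finset.sum_le_sum fun i _ => hterm i
    _ = 1 * m * K ^ (1 / 2 : ℝ) * eLpNorm g p μ := by simp [mul_assoc]
    _ ≤ ENNReal.ofReal √n * m * K ^ (1 / 2 : ℝ) * eLpNorm g p μ := by gcongr

/-- Lemma 1 (a): for `1/p + 1/q = 1` and `g ∈ L^p(Ω,μ)`, if `K_q(Γ) < ∞`
then `E‖R(X)G(X)‖₂ ≤ √n ⬝ m ⬝ √(K_q(Γ)) ⬝ ‖g‖_{L^p(Ω)}`, where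
`K_q(Γ) = (E[s₁(Γ(X))^{-q/2}])^{2/q} = ‖s₁(Γ(X))⁻¹‖_{L^{q/2}}`. -/
theorem stmt0 {Ω : Type*} [MeasurableSpace Ω] (μ : Measure Ω) [IsProbabilityMeasure μ]
    (n m : ℕ) (hn : 1 ≤ n) (hm : 1 ≤ m)
    (γ : Fin n → Ω → ℝ) (hγ : ∀ j, Measurable (γ j))
    (f : Ω → ℝ) (hf : Measurable f)
    (hinv : ∀ᵐ x ∂(Measure.pi fun _ : Fin m => μ), IsUnit ((dmat γ x)ᵀ * dmat γ x).det)
    (p q : ℝ≥0∞) (hp : 1 ≤ p) (hq : 1 ≤ q) (hpq : 1 / p + 1 / q = 1)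
    (g : Ω → ℝ) (hgm : Measurable g) (hg : MemLp g p μ)
    (hK : eLpNorm (fun x : Fin m → Ω => (s1 (dmat γ x))⁻¹) (q / 2)
        (Measure.pi fun _ : Fin m => μ) < ⊤) :
    ∫⁻ x, ENNReal.ofReal (enorm2 (Rmat γ x *ᵥ fun i => g (x i)))
        ∂(Measure.pi fun _ : Fin m => μ)
      ≤ ENNReal.ofReal (Real.sqrt n) * m *
        (eLpNorm (fun x : Fin m → Ω => (s1 (dmat γ x))⁻¹) (q / 2)
          (Measure.pi fun _ : Fin m => μ)) ^ (1 / 2 : ℝ) *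
        eLpNorm g p μ :=
  stmt0_general μ n m hn γ hγ hinv p q hpq g hg
end
end

section
/- Let Y be a nonnegative random variable and fix σ ≥ 0. Suppose there exist constants δ > 0 and γ > 0 such that P(Y ≤ ε) ≤ (δε)^γ for all ε ≥ σ. Then for any r > 0 with r ≠ γ and any σ with 0 < σ < δ⁻¹ (and P(Y ≥ σ) > 0), E(Y^{−r} | Y ≥ σ) ≤ (δ^r / (1 − (δσ)^γ)) · ( 1/(1 − r/γ) + (δσ)^{−(r−γ)}/(1 − γ/r) ). -/
/-!
By the layer-cake formula, `E(Y^{-r}; Y ≥ σ) = ∫₀^∞ P(Y ≥ σ, Y^{-r} > t) dt`. The integrand is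
at most `1`; for `t ≤ σ^{-r}` it is at most `P(Y ≤ t^{-1/r}) ≤ δ^γ t^{-γ/r}`; and it vanishes for
`t > σ^{-r}`. Integrating these bounds over `(0, δ^r]`, `(δ^r, σ^{-r}]` and `(σ^{-r}, ∞)` and
dividing by `P(Y ≥ σ) ≥ 1 - (δσ)^γ` gives the claim.
-/

open MeasureTheory ProbabilityTheory ENNReal Set

lemma setLIntegral_Ioi_eq_Ioc_add_Ioc_add_Ioi (f : ℝ → ℝ≥0∞) {a b : ℝ} (ha : 0 ≤ a) (hab : a ≤ b) :
    ∫⁻ t in Ioi 0, f t = (∫⁻ t in Ioc 0 a, f t) + (∫⁻ t in Ioc a b, f t) + ∫⁻ t in Ioi b, f t := by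
  rw [← Ioc_union_Ioi_eq_Ioi ha, lintegral_union measurableSet_Ioi Ioc_disjoint_Ioi_same,
    ← Ioc_union_Ioi_eq_Ioi hab, lintegral_union measurableSet_Ioi Ioc_disjoint_Ioi_same,
    _root_.add_assoc]

lemma setLIntegral_Ioc_ofReal_mul_rpow {a b c e : ℝ} (ha : 0 < a) (hab : a ≤ b) (hc : 0 ≤ c) :
    ∫⁻ t in Ioc a b, ENNReal.ofReal (c * t ^ e) = ENNReal.ofReal (c * ∫ t in a..b, t ^ e) := by
  have h0 : (0 : ℝ) ∉ uIcc a b := by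
    rw [uIcc_of_le hab]; exact fun h => ha.not_ge h.1
  rw [← intervalIntegral.integral_const_mul, intervalIntegral.integral_of_le hab,
    ofReal_integral_eq_lintegral_ofReal]
  · exact (intervalIntegrable_iff_integrableOn_Ioc_of_le hab).1
      ((intervalIntegral.intervalIntegrable_rpow (Or.inr h0)).const_mul c)
  · filter_upwards [ae_restrict_mem measurableSet_Ioc] with t ht
    exact mul_nonneg hc (Real.rpow_nonneg (ha.trans ht.1).le e)

lemma rpow_add_mul_integral_rpow_eq {δ σ γ r : ℝ} (hδ : 0 < δ) (hσ : 0 < σ) (hγ : γ ≠ 0)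
    (hr : r ≠ 0) (hrγ : r ≠ γ) :
    δ ^ r + δ ^ γ * ∫ t in δ ^ r..σ ^ (-r), t ^ (-(γ / r))
      = δ ^ r * (1 / (1 - r / γ) + (δ * σ) ^ (-(r - γ)) / (1 - γ / r)) := by
  have hsub : r - γ ≠ 0 := sub_ne_zero.mpr hrγ
  have e0 : -(γ / r) + 1 = (r - γ) / r := by field_simp; ring
  have h0 : (0 : ℝ) ∉ uIcc (δ ^ r) (σ ^ (-r)) :=
    notMem_uIcc_of_lt (Real.rpow_pos_of_pos hδ r) (Real.rpow_pos_of_pos hσ (-r))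
  have hne : -(γ / r) ≠ -1 := fun h => by
    apply hsub; field_simp at h; linarith
  rw [integral_rpow (Or.inr ⟨hne, h0⟩), ← Real.rpow_mul hδ.le, ← Real.rpow_mul hσ.le,
    Real.mul_rpow hδ.le hσ.le, e0]
  have e1 : r * ((r - γ) / r) = r - γ := by field_simp
  have e2 : -r * ((r - γ) / r) = -(r - γ) := by field_simp
  have hd : δ ^ r = δ ^ γ * δ ^ (r - γ) := by rw [← Real.rpow_add hδ]; ring_nf
  have hd' : δ ^ (-(r - γ)) = (δ ^ (r - γ))⁻¹ := Real.rpow_neg hδ.le _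
  have hpos : δ ^ (r - γ) ≠ 0 := (Real.rpow_pos_of_pos hδ _).ne'
  rw [e1, e2, hd, hd', show 1 - r / γ = (γ - r) / γ by field_simp,
    show 1 - γ / r = (r - γ) / r by field_simp]
  generalize σ ^ (-(r - γ)) = s
  field_simp
  ring

lemma ofReal_one_sub_le_prob_of_prob_compl_le {Ω : Type*} [MeasurableSpace Ω] {μ : Measure Ω}
    [IsProbabilityMeasure μ] {s : Set Ω} (hs : MeasurableSet s) {p : ℝ} (hp : 0 ≤ p)
    (h : μ sᶜ ≤ ENNReal.ofReal p) : ENNReal.ofReal (1 - p) ≤ μ s := by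
  rw [ENNReal.ofReal_sub _ hp, ENNReal.ofReal_one, ← compl_compl s,
    prob_compl_eq_one_sub hs.compl]
  exact tsub_le_tsub_left h 1

section TailOfNegativePower

variable {Θ : Type*} [MeasurableSpace Θ] {P : Measure Θ} {Y : Θ → ℝ} {σ r t : ℝ}

lemma restrict_setOf_lt_rpow_neg (hYm : Measurable Y) (hσ : 0 < σ) (hr : 0 < r) (ht : 0 < t) :
    P.restrict {θ | σ ≤ Y θ} {θ | t < Y θ ^ (-r)} = P {θ | σ ≤ Y θ ∧ Y θ < t ^ (-r)⁻¹} := by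
  rw [Measure.restrict_apply (measurableSet_lt measurable_const (hYm.pow_const _)), inter_comm]
  congr 1
  ext θ
  simp only [mem_inter_iff, mem_ofPred_eq, and_congr_right_iff]
  exact fun hθ => (Real.lt_rpow_inv_iff_of_neg (hσ.trans_le hθ) ht (neg_neg_of_pos hr)).symm

lemma restrict_setOf_lt_rpow_neg_le_rpow {δ γ : ℝ} (hYm : Measurable Y) (hσ : 0 < σ) (hr : 0 < r)
    (hδ : 0 ≤ δ) (h : ∀ ε : ℝ, σ ≤ ε → P {θ | Y θ ≤ ε} ≤ ENNReal.ofReal ((δ * ε) ^ γ))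
    (ht : 0 < t) (htσ : t ≤ σ ^ (-r)) :
    P.restrict {θ | σ ≤ Y θ} {θ | t < Y θ ^ (-r)} ≤ ENNReal.ofReal (δ ^ γ * t ^ (-(γ / r))) := by
  have hσε : σ ≤ t ^ (-r)⁻¹ := (Real.le_rpow_inv_iff_of_neg hσ ht (neg_neg_of_pos hr)).2 htσ
  calc P.restrict {θ | σ ≤ Y θ} {θ | t < Y θ ^ (-r)}
      ≤ P {θ | Y θ ≤ t ^ (-r)⁻¹} := by
        rw [restrict_setOf_lt_rpow_neg hYm hσ hr ht]
        exact measure_mono fun θ hθ => hθ.2.le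
    _ ≤ ENNReal.ofReal ((δ * t ^ (-r)⁻¹) ^ γ) := h _ hσε
    _ = ENNReal.ofReal (δ ^ γ * t ^ (-(γ / r))) := by
        rw [Real.mul_rpow hδ (Real.rpow_nonneg ht.le _), ← Real.rpow_mul ht.le]
        ring_nf

lemma restrict_setOf_lt_rpow_neg_eq_zero (hYm : Measurable Y) (hσ : 0 < σ) (hr : 0 < r)
    (htσ : σ ^ (-r) < t) :
    P.restrict {θ | σ ≤ Y θ} {θ | t < Y θ ^ (-r)} = 0 := by
  have ht : 0 < t := (Real.rpow_pos_of_pos hσ _).trans htσ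
  have hε : t ^ (-r)⁻¹ < σ := (Real.rpow_inv_lt_iff_of_neg ht hσ (neg_neg_of_pos hr)).2 htσ
  rw [restrict_setOf_lt_rpow_neg hYm hσ hr ht]
  exact measure_mono_null (fun θ hθ => (hε.not_ge (hθ.1.trans hθ.2.le)).elim) measure_empty

lemma setLIntegral_rpow_neg_le [IsProbabilityMeasure P] {δ γ : ℝ} (hYm : Measurable Y)
    (hσ : 0 < σ) (hr : 0 < r) (hδ : 0 < δ) (hσδ : σ ≤ δ⁻¹)
    (h : ∀ ε : ℝ, σ ≤ ε → P {θ | Y θ ≤ ε} ≤ ENNReal.ofReal ((δ * ε) ^ γ)) :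
    ∫⁻ θ in {θ | σ ≤ Y θ}, ENNReal.ofReal (Y θ) ^ (-r) ∂P
      ≤ ENNReal.ofReal (δ ^ r + δ ^ γ * ∫ t in δ ^ r..σ ^ (-r), t ^ (-(γ / r))) := by
  set A := {θ | σ ≤ Y θ}
  have hA : MeasurableSet A := hYm measurableSet_Ici
  have ha : 0 < δ ^ r := Real.rpow_pos_of_pos hδ r
  have hab : δ ^ r ≤ σ ^ (-r) := by
    rw [Real.rpow_neg hσ.le, ← Real.inv_rpow hσ.le]
    exact Real.rpow_le_rpow hδ.le (le_inv_comm₀ hσ hδ |>.1 hσδ) hr.le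
  have hYpos : ∀ θ ∈ A, 0 < Y θ := fun θ hθ => hσ.trans_le hθ
  have hlayer : ∫⁻ θ in A, ENNReal.ofReal (Y θ) ^ (-r) ∂P
      = ∫⁻ t in Ioi 0, P.restrict A {θ | t < Y θ ^ (-r)} := by
    rw [setLIntegral_congr_fun hA fun θ hθ => ENNReal.ofReal_rpow_of_pos (hYpos θ hθ)]
    refine lintegral_eq_lintegral_meas_lt _ ?_ (hYm.pow_const _).aemeasurable
    filter_upwards [ae_restrict_mem hA] with θ hθ
    exact Real.rpow_nonneg (hYpos θ hθ).le _
  have hint_nonneg : 0 ≤ ∫ t in δ ^ r..σ ^ (-r), t ^ (-(γ / r)) :=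
    intervalIntegral.integral_nonneg hab fun t ht => Real.rpow_nonneg (ha.trans_le ht.1).le _
  rw [hlayer, setLIntegral_Ioi_eq_Ioc_add_Ioc_add_Ioi _ ha.le hab,
    ENNReal.ofReal_add ha.le (by positivity), ← add_zero (ENNReal.ofReal _ + _)]
  gcongr ?_ + ?_ + ?_
  · calc ∫⁻ t in Ioc 0 (δ ^ r), P.restrict A {θ | t < Y θ ^ (-r)}
        ≤ ∫⁻ t in Ioc 0 (δ ^ r), 1 :=
          setLIntegral_mono measurable_const fun t _ =>
            (Measure.restrict_apply_le _ _).trans prob_le_one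
      _ = ENNReal.ofReal (δ ^ r) := by rw [setLIntegral_one, Real.volume_Ioc, sub_zero]
  · calc ∫⁻ t in Ioc (δ ^ r) (σ ^ (-r)), P.restrict A {θ | t < Y θ ^ (-r)}
        ≤ ∫⁻ t in Ioc (δ ^ r) (σ ^ (-r)), ENNReal.ofReal (δ ^ γ * t ^ (-(γ / r))) :=
          setLIntegral_mono (by fun_prop) fun t ht =>
            restrict_setOf_lt_rpow_neg_le_rpow hYm hσ hr hδ.le h (ha.trans ht.1) ht.2
      _ = _ := setLIntegral_Ioc_ofReal_mul_rpow ha hab (by positivity)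
  · calc ∫⁻ t in Ioi (σ ^ (-r)), P.restrict A {θ | t < Y θ ^ (-r)}
        ≤ ∫⁻ t in Ioi (σ ^ (-r)), 0 :=
          setLIntegral_mono measurable_const fun t ht =>
            (restrict_setOf_lt_rpow_neg_eq_zero hYm hσ hr ht).le
      _ = 0 := lintegral_zero

end TailOfNegativePower

theorem stmt10_general {Θ : Type*} [MeasurableSpace Θ] (P : Measure Θ) [IsProbabilityMeasure P]
    (Y : Θ → ℝ) (hYm : Measurable Y)
    (σ δ γ : ℝ) (hδ : 0 < δ) (hγ : 0 < γ)
    (h : ∀ ε : ℝ, σ ≤ ε → P {θ | Y θ ≤ ε} ≤ ENNReal.ofReal ((δ * ε) ^ γ))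
    (hσ0 : 0 < σ) (hσδ : σ < δ⁻¹)
    (r : ℝ) (hr0 : 0 < r) (hrγ : r ≠ γ) :
    ∫⁻ θ, ENNReal.ofReal (Y θ) ^ (-r) ∂(P[|{θ | σ ≤ Y θ}])
      ≤ ENNReal.ofReal (δ ^ r / (1 - (δ * σ) ^ γ) *
          (1 / (1 - r / γ) + (δ * σ) ^ (-(r - γ)) / (1 - γ / r))) := by
  have hδσ : (δ * σ) ^ γ < 1 := by
    refine Real.rpow_lt_one (by positivity) ?_ hγ
    simpa [mul_inv_cancel₀ hδ.ne'] using mul_lt_mul_of_pos_left hσδ hδ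
  have hA : ENNReal.ofReal (1 - (δ * σ) ^ γ) ≤ P {θ | σ ≤ Y θ} :=
    ofReal_one_sub_le_prob_of_prob_compl_le (s := {θ | σ ≤ Y θ}) (hYm measurableSet_Ici)
      (by positivity) ((measure_mono fun θ (hθ : ¬σ ≤ Y θ) => (not_le.1 hθ).le).trans
        (h σ le_rfl))
  rw [ProbabilityTheory.cond, lintegral_smul_measure, smul_eq_mul]
  calc (P {θ | σ ≤ Y θ})⁻¹ * ∫⁻ θ in {θ | σ ≤ Y θ}, ENNReal.ofReal (Y θ) ^ (-r) ∂P
      ≤ (ENNReal.ofReal (1 - (δ * σ) ^ γ))⁻¹ *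
          ENNReal.ofReal (δ ^ r + δ ^ γ * ∫ t in δ ^ r..σ ^ (-r), t ^ (-(γ / r))) := by
        gcongr
        exact setLIntegral_rpow_neg_le hYm hσ0 hr0 hδ hσδ.le h
    _ = _ := by
        rw [rpow_add_mul_integral_rpow_eq hδ hσ0 hγ.ne' hr0.ne' hrγ,
          ← ENNReal.ofReal_inv_of_pos (by linarith), ← ENNReal.ofReal_mul (by positivity)]
        ring_nf

/-- Proposition 7, conditional negative moments: if `Y ≥ 0` and
`P(Y ≤ ε) ≤ (δε)^γ` for all `ε ≥ σ` (with `δ, γ > 0`), then for any `r > 0` with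
`r ≠ γ` and `0 < σ < δ⁻¹` (with `P(Y ≥ σ) > 0`),
`E(Y^{-r} | Y ≥ σ) ≤ (δ^r/(1 - (δσ)^γ)) ⬝ (1/(1 - r/γ) + (δσ)^{-(r-γ)}/(1 - γ/r))`. -/
theorem stmt10 {Θ : Type*} [MeasurableSpace Θ] (P : Measure Θ) [IsProbabilityMeasure P]
    (Y : Θ → ℝ) (hYm : Measurable Y) (hY : ∀ θ, 0 ≤ Y θ)
    (σ δ γ : ℝ) (hδ : 0 < δ) (hγ : 0 < γ)
    (h : ∀ ε : ℝ, σ ≤ ε → P {θ | Y θ ≤ ε} ≤ ENNReal.ofReal ((δ * ε) ^ γ))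
    (hσ0 : 0 < σ) (hσδ : σ < δ⁻¹) (hpos : 0 < P {θ | σ ≤ Y θ})
    (r : ℝ) (hr0 : 0 < r) (hrγ : r ≠ γ) :
    ∫⁻ θ, ENNReal.ofReal (Y θ) ^ (-r) ∂(P[|{θ | σ ≤ Y θ}])
      ≤ ENNReal.ofReal (δ ^ r / (1 - (δ * σ) ^ γ) *
          (1 / (1 - r / γ) + (δ * σ) ^ (-(r - γ)) / (1 - γ / r))) :=
  stmt10_general P Y hYm σ δ γ hδ hγ h hσ0 hσδ r hr0 hrγ
end
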